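/- Under the hypotheses of the one-step block Kaczmarz contraction (partition S of {1,…,m} with s blocks, upper paving bound β_A, σ_min(A) > 0, consistent system AY* = F, initial Y⁽⁰⁾ with Y⁽⁰⁾ − Y* in the column space of Aᵀ columnwise), the iterates Y⁽ᵏ⁾ of the randomized block Kaczmarz method satisfy E‖Y⁽ᵏ⁾ − Y*‖_F² ≤ (1 − σ_min(A)²/(s β_A))ᵏ ‖Y⁽⁰⁾ − Y*‖_F² for all k ≥ 0; in particular E‖Y⁽ᵏ⁾ − Y*‖_F² → 0 as k → ∞. -/
import Mathlib


open Matrix Finset Filter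

/-- Squared Frobenius norm of a real matrix. -/
noncomputable def frobSq {α β : Type*} [Fintype α] [Fintype β] (M : Matrix α β ℝ) : ℝ :=
  ∑ i, ∑ j, (M i j) ^ 2

/-- Square of the smallest singular value of a real matrix. -/
noncomputable def sigMinSq {m n : ℕ} (A : Matrix (Fin m) (Fin n) ℝ) : ℝ :=
  sInf {c : ℝ | ∃ v : Fin n → ℝ, (∑ j, (v j) ^ 2) = 1 ∧ c = ∑ i, (A.mulVec v i) ^ 2}

/-- Square of the largest singular value of a real matrix. -/
noncomputable def sigMaxSq {m n : ℕ} (A : Matrix (Fin m) (Fin n) ℝ) : ℝ :=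
  sSup {c : ℝ | ∃ v : Fin n → ℝ, (∑ j, (v j) ^ 2) = 1 ∧ c = ∑ i, (A.mulVec v i) ^ 2}

/-- `P` is the Moore–Penrose pseudoinverse of `M` (the four Penrose conditions). -/
def IsMPInv {α β : Type*} [Fintype α] [Fintype β] (M : Matrix α β ℝ) (P : Matrix β α ℝ) : Prop :=
  M * P * M = M ∧ P * M * P = P ∧ (M * P)ᵀ = M * P ∧ (P * M)ᵀ = P * M

/-- Row submatrix `A_{U,:}`. -/
def rowBlock {m n : ℕ} (A : Matrix (Fin m) (Fin n) ℝ) (U : Finset (Fin m)) :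
    Matrix {i // i ∈ U} (Fin n) ℝ := A.submatrix (fun i => (i : Fin m)) id

/-- Column submatrix `B_{:,V}`. -/
def colBlock {p q : ℕ} (B : Matrix (Fin p) (Fin q) ℝ) (V : Finset (Fin q)) :
    Matrix (Fin p) {j // j ∈ V} ℝ := B.submatrix id (fun j => (j : Fin q))

lemma frobSq_nonneg {α β : Type*} [Fintype α] [Fintype β] (M : Matrix α β ℝ) : 0 ≤ frobSq M :=
  Finset.sum_nonneg fun _ _ => Finset.sum_nonneg fun _ _ => sq_nonneg _

lemma frobSq_eq_trace {α β : Type*} [Fintype α] [Fintype β] (M : Matrix α β ℝ) :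
    frobSq M = Matrix.trace (Mᵀ * M) := by
  simp only [frobSq, Matrix.trace, Matrix.diag, Matrix.mul_apply, Matrix.transpose_apply, sq]
  exact Finset.sum_comm

lemma frobSq_col {α β : Type*} [Fintype α] [Fintype β] (M : Matrix α β ℝ) :
    frobSq M = ∑ j, ∑ i, (M i j) ^ 2 := Finset.sum_comm

lemma col_mul {α β γ : Type*} [Fintype β] (M : Matrix α β ℝ) (E : Matrix β γ ℝ) (j : γ) :
    (fun i => (M * E) i j) = M.mulVec (fun i => E i j) := by
  ext i; simp [Matrix.mul_apply, Matrix.mulVec, dotProduct]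

lemma frobSq_sub_proj {α β : Type*} [Fintype α] [Fintype β] (Q : Matrix α α ℝ)
    (hQt : Qᵀ = Q) (hQQ : Q * Q = Q) (E : Matrix α β ℝ) :
    frobSq (E - Q * E) = frobSq E - frobSq (Q * E) := by
  rw [frobSq_eq_trace, frobSq_eq_trace, frobSq_eq_trace]
  have h1 : (Q * E)ᵀ * (Q * E) = Eᵀ * (Q * E) := by
    rw [Matrix.transpose_mul, hQt, Matrix.mul_assoc, ← Matrix.mul_assoc Q Q E, hQQ]
  have h3 : (Q * E)ᵀ * E = Eᵀ * (Q * E) := by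
    rw [Matrix.transpose_mul, hQt, Matrix.mul_assoc]
  have h2 : (E - Q * E)ᵀ * (E - Q * E) = Eᵀ * E - Eᵀ * (Q * E) := by
    rw [Matrix.transpose_sub, Matrix.sub_mul, Matrix.mul_sub, Matrix.mul_sub, h1, h3]
    abel
  rw [h2, Matrix.trace_sub, h1]

lemma rowBlock_mul {m n q : ℕ} (A : Matrix (Fin m) (Fin n) ℝ) (U : Finset (Fin m))
    (E : Matrix (Fin n) (Fin q) ℝ) :
    rowBlock A U * E = (A * E).submatrix (fun i : {i // i ∈ U} => (i : Fin m)) id := by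
  ext i j; simp [rowBlock, Matrix.mul_apply, Matrix.submatrix]

lemma rowBlock_mulVec {m n : ℕ} (A : Matrix (Fin m) (Fin n) ℝ) (U : Finset (Fin m))
    (v : Fin n → ℝ) (i : {i // i ∈ U}) :
    (rowBlock A U).mulVec v i = A.mulVec v (i : Fin m) := by
  simp [rowBlock, Matrix.mulVec, dotProduct, Matrix.submatrix]

set_option maxHeartbeats 4000000 in
theorem stmt13 (m n q s : ℕ) (hs : 0 < s) (A : Matrix (Fin m) (Fin n) ℝ)
    (S : Fin s → Finset (Fin m))
    (hdisj : ∀ k l, k ≠ l → Disjoint (S k) (S l))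
    (hcover : ∀ i, ∃ k, i ∈ S k)
    (βA : ℝ)
    (hpav : ∀ k (v : Fin n → ℝ),
      (∑ i, ((rowBlock A (S k)).mulVec v i) ^ 2) ≤ βA * ∑ j, (v j) ^ 2)
    (hσ : 0 < sigMinSq A)
    (Y0 Ystar : Matrix (Fin n) (Fin q) ℝ) (F : Matrix (Fin m) (Fin q) ℝ) (hF : F = A * Ystar)
    (Z : Matrix (Fin m) (Fin q) ℝ) (hYZ : Y0 - Ystar = Aᵀ * Z)
    (P : ∀ k : Fin s, Matrix (Fin n) {i // i ∈ S k} ℝ)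
    (hP : ∀ k, IsMPInv (rowBlock A (S k)) (P k))
    (Yseq : (ℕ → Fin s) → ℕ → Matrix (Fin n) (Fin q) ℝ)
    (hY0 : ∀ ω, Yseq ω 0 = Y0)
    (hstep : ∀ ω k, Yseq ω (k + 1)
      = Yseq ω k + P (ω k) * (rowBlock F (S (ω k)) - rowBlock A (S (ω k)) * Yseq ω k)) :
    (∀ k : ℕ, (1 / (s : ℝ) ^ k) * ∑ c : Fin k → Fin s,
        frobSq (Yseq (fun j => if h : j < k then c ⟨j, h⟩ else ⟨0, hs⟩) k - Ystar)
      ≤ (1 - sigMinSq A / (s * βA)) ^ k * frobSq (Y0 - Ystar))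
    ∧ Filter.Tendsto (fun k : ℕ => (1 / (s : ℝ) ^ k) * ∑ c : Fin k → Fin s,
        frobSq (Yseq (fun j => if h : j < k then c ⟨j, h⟩ else ⟨0, hs⟩) k - Ystar))
      Filter.atTop (nhds 0) := by
  have hs' : (0:ℝ) < s := by exact_mod_cast hs
  set σ2 := sigMinSq A with hσ2
  -- n is positive
  have hn : 0 < n := by
    by_contra h
    push_neg at h
    have h0 : n = 0 := Nat.le_zero.mp h
    subst h0
    have : sigMinSq A = 0 := by
      have hempty : {c : ℝ | ∃ v : Fin 0 → ℝ, (∑ j, (v j) ^ 2) = 1 ∧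
          c = ∑ i, (A.mulVec v i) ^ 2} = ∅ := by
        ext c; simp
      rw [sigMinSq, hempty]
      exact Real.sInf_empty
    rw [hσ2, this] at hσ; exact lt_irrefl 0 hσ
  -- the unit vector
  set e : Fin n → ℝ := fun j => if j = ⟨0, hn⟩ then 1 else 0 with he
  have heu : (∑ j, (e j) ^ 2) = 1 := by
    rw [he]; simp [apply_ite (fun x : ℝ => x ^ 2)]
  -- sInf estimate
  have hlb : ∀ c ∈ {c : ℝ | ∃ v : Fin n → ℝ, (∑ j, (v j) ^ 2) = 1 ∧
      c = ∑ i, (A.mulVec v i) ^ 2}, (0:ℝ) ≤ c := by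
    rintro c ⟨v, -, rfl⟩
    exact Finset.sum_nonneg fun _ _ => sq_nonneg _
  have hsle : ∀ v : Fin n → ℝ, (∑ j, (v j) ^ 2) = 1 → σ2 ≤ ∑ i, (A.mulVec v i) ^ 2 := by
    intro v hv
    exact csInf_le ⟨0, hlb⟩ ⟨v, hv, rfl⟩
  -- sigma bound for general vectors
  have hσv : ∀ v : Fin n → ℝ, σ2 * (∑ j, (v j) ^ 2) ≤ ∑ i, (A.mulVec v i) ^ 2 := by
    intro v
    rcases eq_or_lt_of_le (Finset.sum_nonneg fun j _ => sq_nonneg (v j)) with hv | hv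
    · rw [← hv, mul_zero]
      exact Finset.sum_nonneg fun _ _ => sq_nonneg _
    · set c := ∑ j, (v j) ^ 2 with hc
      have hcpos : 0 < c := hv
      have hsc : Real.sqrt c > 0 := Real.sqrt_pos.mpr hcpos
      set u : Fin n → ℝ := fun j => v j / Real.sqrt c with hu
      have hu1 : (∑ j, (u j) ^ 2) = 1 := by
        rw [hu]
        simp only [div_pow, Real.sq_sqrt hcpos.le]
        rw [← Finset.sum_div, ← hc, div_self hcpos.ne']
      have hmv : ∀ i, A.mulVec u i = A.mulVec v i / Real.sqrt c := by
        intro i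
        simp only [hu, Matrix.mulVec, dotProduct, Finset.sum_div]
        exact Finset.sum_congr rfl fun j _ => by ring
      have := hsle u hu1
      have h2 : ∑ i, (A.mulVec u i) ^ 2 = (∑ i, (A.mulVec v i) ^ 2) / c := by
        rw [Finset.sum_div]
        exact Finset.sum_congr rfl fun i _ => by
          rw [hmv i, div_pow, Real.sq_sqrt hcpos.le]
      rw [h2] at this
      calc σ2 * c ≤ ((∑ i, (A.mulVec v i) ^ 2) / c) * c := by
            exact mul_le_mul_of_nonneg_right this hcpos.le
        _ = ∑ i, (A.mulVec v i) ^ 2 := div_mul_cancel₀ _ hcpos.ne'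
  -- partition of row sums
  have hpart : ∀ f : Fin m → ℝ, ∑ i, f i = ∑ t : Fin s, ∑ i ∈ S t, f i := by
    intro f
    have hU : (Finset.univ : Finset (Fin s)).biUnion S = Finset.univ := by
      ext i; simpa using hcover i
    rw [← hU, Finset.sum_biUnion]
    intro a _ b _ hab
    exact hdisj a b hab
  have hblocksum : ∀ v : Fin n → ℝ, ∑ i, (A.mulVec v i) ^ 2
      = ∑ t : Fin s, ∑ i : {i // i ∈ S t}, ((rowBlock A (S t)).mulVec v i) ^ 2 := by
    intro v
    rw [hpart (fun i => (A.mulVec v i) ^ 2)]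
    refine Finset.sum_congr rfl fun t _ => ?_
    rw [← Finset.sum_coe_sort (S t) (fun i => (A.mulVec v i) ^ 2)]
    exact Finset.sum_congr rfl fun i _ => by rw [rowBlock_mulVec]
  -- σ2 ≤ s βA, βA > 0
  have hAvle : ∀ v : Fin n → ℝ, ∑ i, (A.mulVec v i) ^ 2 ≤ (s : ℝ) * βA * ∑ j, (v j) ^ 2 := by
    intro v
    rw [hblocksum v]
    calc ∑ t : Fin s, ∑ i : {i // i ∈ S t}, ((rowBlock A (S t)).mulVec v i) ^ 2
        ≤ ∑ _t : Fin s, βA * ∑ j, (v j) ^ 2 :=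
          Finset.sum_le_sum fun t _ => hpav t v
      _ = (s : ℝ) * βA * ∑ j, (v j) ^ 2 := by
          rw [Finset.sum_const, Finset.card_univ, Fintype.card_fin, nsmul_eq_mul]; ring
  have hσsβ : σ2 ≤ (s : ℝ) * βA := by
    have h1 := hsle e heu
    have h2 := hAvle e
    rw [heu, mul_one] at h2
    linarith
  have hβpos : 0 < βA := by
    by_contra h
    push_neg at h
    have : (s : ℝ) * βA ≤ 0 := mul_nonpos_of_nonneg_of_nonpos hs'.le h
    linarith
  set γ : ℝ := 1 - σ2 / ((s : ℝ) * βA) with hγ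
  have hγ0 : 0 ≤ γ := by
    rw [hγ]
    have : σ2 / ((s : ℝ) * βA) ≤ 1 := by
      rw [div_le_one (by positivity)]
      exact hσsβ
    linarith
  have hγ1 : γ < 1 := by
    rw [hγ]
    have : 0 < σ2 / ((s : ℝ) * βA) := by positivity
    linarith
  -- matrix versions
  have hσM : ∀ E : Matrix (Fin n) (Fin q) ℝ, σ2 * frobSq E ≤ frobSq (A * E) := by
    intro E
    rw [frobSq_col, frobSq_col, Finset.mul_sum]
    refine Finset.sum_le_sum fun j _ => ?_
    have := hσv (fun i => E i j)
    calc σ2 * ∑ i, (E i j) ^ 2 ≤ ∑ i, (A.mulVec (fun i => E i j) i) ^ 2 := this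
      _ = ∑ i, ((A * E) i j) ^ 2 := by rw [← col_mul]
  have hpavM : ∀ (t : Fin s) (E : Matrix (Fin n) (Fin q) ℝ),
      frobSq (rowBlock A (S t) * E) ≤ βA * frobSq E := by
    intro t E
    rw [frobSq_col, frobSq_col, Finset.mul_sum]
    refine Finset.sum_le_sum fun j _ => ?_
    calc ∑ i, ((rowBlock A (S t) * E) i j) ^ 2
        = ∑ i, ((rowBlock A (S t)).mulVec (fun i => E i j) i) ^ 2 := by rw [← col_mul]
      _ ≤ βA * ∑ i, (E i j) ^ 2 := hpav t _
  have hblockM : ∀ E : Matrix (Fin n) (Fin q) ℝ,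
      ∑ t : Fin s, frobSq (rowBlock A (S t) * E) = frobSq (A * E) := by
    intro E
    unfold frobSq
    rw [hpart (fun i => ∑ j, ((A * E) i j) ^ 2)]
    refine Finset.sum_congr rfl fun t _ => ?_
    rw [rowBlock_mul]
    rw [← Finset.sum_coe_sort (S t) (fun i => ∑ j, ((A * E) i j) ^ 2)]
    rfl
  -- projection properties
  have hQt : ∀ t, (P t * rowBlock A (S t))ᵀ = P t * rowBlock A (S t) := fun t => (hP t).2.2.2
  have hQQ : ∀ t, (P t * rowBlock A (S t)) * (P t * rowBlock A (S t)) = P t * rowBlock A (S t) := by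
    intro t
    rw [Matrix.mul_assoc, ← Matrix.mul_assoc (rowBlock A (S t)) (P t), (hP t).1]
  have hMQ : ∀ t (E : Matrix (Fin n) (Fin q) ℝ),
      rowBlock A (S t) * ((P t * rowBlock A (S t)) * E) = rowBlock A (S t) * E := by
    intro t E
    rw [← Matrix.mul_assoc, ← Matrix.mul_assoc, (hP t).1]
  -- the key one-step inequality
  have key : ∀ E : Matrix (Fin n) (Fin q) ℝ,
      ∑ t : Fin s, frobSq (E - P t * (rowBlock A (S t) * E)) ≤ ((s : ℝ) * γ) * frobSq E := by
    intro E
    have heq : ∀ t : Fin s, frobSq (E - P t * (rowBlock A (S t) * E))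
        = frobSq E - frobSq ((P t * rowBlock A (S t)) * E) := by
      intro t
      rw [← Matrix.mul_assoc]
      exact frobSq_sub_proj _ (hQt t) (hQQ t) E
    have hQlb : ∀ t : Fin s, frobSq (rowBlock A (S t) * E)
        ≤ βA * frobSq ((P t * rowBlock A (S t)) * E) := by
      intro t
      have := hpavM t ((P t * rowBlock A (S t)) * E)
      rwa [hMQ t E] at this
    have hsum1 : ∑ t : Fin s, frobSq (rowBlock A (S t) * E)
        ≤ βA * ∑ t : Fin s, frobSq ((P t * rowBlock A (S t)) * E) := by
      rw [Finset.mul_sum]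
      exact Finset.sum_le_sum fun t _ => hQlb t
    have hsum2 : σ2 * frobSq E ≤ βA * ∑ t : Fin s, frobSq ((P t * rowBlock A (S t)) * E) := by
      calc σ2 * frobSq E ≤ frobSq (A * E) := hσM E
        _ = ∑ t : Fin s, frobSq (rowBlock A (S t) * E) := (hblockM E).symm
        _ ≤ _ := hsum1
    have hdivs : σ2 / βA * frobSq E ≤ ∑ t : Fin s, frobSq ((P t * rowBlock A (S t)) * E) := by
      rw [div_mul_eq_mul_div, div_le_iff₀ hβpos, mul_comm _ βA]
      exact hsum2
    calc ∑ t : Fin s, frobSq (E - P t * (rowBlock A (S t) * E))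
        = ∑ t : Fin s, (frobSq E - frobSq ((P t * rowBlock A (S t)) * E)) :=
          Finset.sum_congr rfl fun t _ => heq t
      _ = (s : ℝ) * frobSq E - ∑ t : Fin s, frobSq ((P t * rowBlock A (S t)) * E) := by
          rw [Finset.sum_sub_distrib, Finset.sum_const, Finset.card_univ, Fintype.card_fin,
            nsmul_eq_mul]
      _ ≤ (s : ℝ) * frobSq E - σ2 / βA * frobSq E := by linarith
      _ = ((s : ℝ) * γ) * frobSq E := by
          have hsγ : (s : ℝ) * γ = (s : ℝ) - σ2 / βA := by
            rw [hγ]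
            field_simp
          rw [hsγ]; ring
  -- dependence on finite prefix
  have hdep : ∀ (k : ℕ) (ω ω' : ℕ → Fin s), (∀ j, j < k → ω j = ω' j) →
      Yseq ω k = Yseq ω' k := by
    intro k
    induction k with
    | zero => intro ω ω' _; rw [hY0, hY0]
    | succ k ih =>
      intro ω ω' h
      rw [hstep, hstep, ih ω ω' (fun j hj => h j (Nat.lt_succ_of_lt hj)),
        h k (Nat.lt_succ_self k)]
  -- error recursion
  have hstep' : ∀ (ω : ℕ → Fin s) (k : ℕ), Yseq ω (k + 1) - Ystar
      = (Yseq ω k - Ystar) - P (ω k) * (rowBlock A (S (ω k)) * (Yseq ω k - Ystar)) := by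
    intro ω k
    have hFb : rowBlock F (S (ω k)) = rowBlock A (S (ω k)) * Ystar := by
      rw [hF, rowBlock_mul]; rfl
    rw [hstep, hFb]
    simp only [Matrix.mul_sub]
    abel
  -- one-step recursion for the sums
  have hG : ∀ k : ℕ,
      (∑ c : Fin (k+1) → Fin s,
        frobSq (Yseq (fun j => if h : j < k + 1 then c ⟨j, h⟩ else ⟨0, hs⟩) (k+1) - Ystar))
      ≤ ((s : ℝ) * γ) * ∑ c : Fin k → Fin s,
        frobSq (Yseq (fun j => if h : j < k then c ⟨j, h⟩ else ⟨0, hs⟩) k - Ystar) := by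
    intro k
    have hsumeq : (∑ c : Fin (k+1) → Fin s,
        frobSq (Yseq (fun j => if h : j < k + 1 then c ⟨j, h⟩ else ⟨0, hs⟩) (k+1) - Ystar))
        = ∑ p : (Fin k → Fin s) × Fin s,
            frobSq ((Yseq (fun j => if h : j < k then p.1 ⟨j, h⟩ else ⟨0, hs⟩) k - Ystar)
              - P p.2 * (rowBlock A (S p.2) *
                  (Yseq (fun j => if h : j < k then p.1 ⟨j, h⟩ else ⟨0, hs⟩) k - Ystar))) := by
      refine (Fintype.sum_equiv ((Equiv.prodComm (Fin k → Fin s) (Fin s)).trans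
        (Fin.snocEquiv (fun _ => Fin s))) _ _ ?_).symm
      rintro ⟨c', t⟩
      simp only [Equiv.trans_apply, Equiv.prodComm_apply, Prod.swap_prod_mk,
        Fin.snocEquiv_apply]
      have hωk : (if h : k < k + 1 then (Fin.snoc c' t : Fin (k+1) → Fin s) ⟨k, h⟩
          else (⟨0, hs⟩ : Fin s)) = t := by
        rw [dif_pos (Nat.lt_succ_self k)]
        have h1 : (⟨k, Nat.lt_succ_self k⟩ : Fin (k+1)) = Fin.last k := rfl
        rw [h1, Fin.snoc_last]
      have hωpre : Yseq (fun j => if h : j < k + 1 then (Fin.snoc c' t : Fin (k+1) → Fin s) ⟨j, h⟩ else ⟨0, hs⟩) k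
          = Yseq (fun j => if h : j < k then c' ⟨j, h⟩ else ⟨0, hs⟩) k := by
        apply hdep
        intro j hj
        simp only [dif_pos hj, dif_pos (Nat.lt_succ_of_lt hj)]
        have h1 : (⟨j, Nat.lt_succ_of_lt hj⟩ : Fin (k+1)) = Fin.castSucc ⟨j, hj⟩ := rfl
        rw [h1, Fin.snoc_castSucc]
      rw [hstep', hωpre, hωk]
    rw [hsumeq]
    set E' : (Fin k → Fin s) → Matrix (Fin n) (Fin q) ℝ := fun c' =>
      Yseq (fun j => if h : j < k then c' ⟨j, h⟩ else ⟨0, hs⟩) k - Ystar with hE'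
    calc ∑ p : (Fin k → Fin s) × Fin s,
          frobSq (E' p.1 - P p.2 * (rowBlock A (S p.2) * E' p.1))
        = ∑ c' : Fin k → Fin s, ∑ t : Fin s,
            frobSq (E' c' - P t * (rowBlock A (S t) * E' c')) :=
          Fintype.sum_prod_type
            (f := fun p : (Fin k → Fin s) × Fin s =>
              frobSq (E' p.1 - P p.2 * (rowBlock A (S p.2) * E' p.1)))
      _ ≤ ∑ c' : Fin k → Fin s, ((s : ℝ) * γ) * frobSq (E' c') :=
          Finset.sum_le_sum fun c' _ => key (E' c')
      _ = ((s : ℝ) * γ) * ∑ c' : Fin k → Fin s, frobSq (E' c') :=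
          (Finset.mul_sum _ _ _).symm
  -- main inequality by induction
  have hmain : ∀ k : ℕ, (1 / (s : ℝ) ^ k) * ∑ c : Fin k → Fin s,
      frobSq (Yseq (fun j => if h : j < k then c ⟨j, h⟩ else ⟨0, hs⟩) k - Ystar)
      ≤ γ ^ k * frobSq (Y0 - Ystar) := by
    intro k
    induction k with
    | zero =>
      simp only [pow_zero, one_mul, div_one]
      rw [Fintype.sum_unique]
      rw [hY0]
    | succ k ih =>
      set X : ℝ := ∑ c : Fin k → Fin s,
        frobSq (Yseq (fun j => if h : j < k then c ⟨j, h⟩ else ⟨0, hs⟩) k - Ystar) with hX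
      set X1 : ℝ := ∑ c : Fin (k+1) → Fin s,
        frobSq (Yseq (fun j => if h : j < k + 1 then c ⟨j, h⟩ else ⟨0, hs⟩) (k+1) - Ystar)
        with hX1
      have h1 : X1 ≤ ((s : ℝ) * γ) * X := hG k
      have hXpos : 0 ≤ X := Finset.sum_nonneg fun c _ => frobSq_nonneg _
      calc (1 / (s : ℝ) ^ (k+1)) * X1
          ≤ (1 / (s : ℝ) ^ (k+1)) * (((s : ℝ) * γ) * X) :=
            mul_le_mul_of_nonneg_left h1 (by positivity)
        _ = γ * ((1 / (s : ℝ) ^ k) * X) := by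
            rw [pow_succ]
            field_simp
        _ ≤ γ * (γ ^ k * frobSq (Y0 - Ystar)) := mul_le_mul_of_nonneg_left ih hγ0
        _ = γ ^ (k+1) * frobSq (Y0 - Ystar) := by ring
  refine ⟨hmain, ?_⟩
  have hTnonneg : ∀ k : ℕ, 0 ≤ (1 / (s : ℝ) ^ k) * ∑ c : Fin k → Fin s,
      frobSq (Yseq (fun j => if h : j < k then c ⟨j, h⟩ else ⟨0, hs⟩) k - Ystar) := by
    intro k
    exact mul_nonneg (by positivity) (Finset.sum_nonneg fun c _ => frobSq_nonneg _)
  have hlim : Tendsto (fun k : ℕ => γ ^ k * frobSq (Y0 - Ystar)) atTop (nhds 0) := by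
    have := (tendsto_pow_atTop_nhds_zero_of_lt_one hγ0 hγ1).mul_const (frobSq (Y0 - Ystar))
    simpa using this
  exact squeeze_zero hTnonneg hmain hlim
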